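/- Let G be a strong M-graph. Then G has a real linear system g^1_2: there exists a real effective divisor D on G of degree 2 with rk(D) ≥ 1. -/

import Mathlib

/-- A finite graph: finite sets of vertices and edges, and an incidence map
assigning to each edge the (unordered) pair of its ends (loops and multiple
edges are allowed). -/
structure FinGraph where
  V : Type
  E : Type
  [decV : DecidableEq V]
  [fintV : Fintype V]
  [fintE : Fintype E]
  ψ : E → Sym2 V

attribute [instance] FinGraph.decV FinGraph.fintV FinGraph.fintE

namespace FinGraph

variable (G : FinGraph)

/-- Two vertices are adjacent if some edge has exactly them as its ends. -/
def Adj (v w : G.V) : Prop := ∃ e : G.E, G.ψ e = s(v, w)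

/-- A graph is connected if it is nonempty and any two vertices are joined by a
walk (equivalently, related by the reflexive-transitive closure of adjacency). -/
def Connected : Prop := Nonempty G.V ∧ ∀ v w : G.V, Relation.ReflTransGen G.Adj v w

/-- The number of connected components. -/
noncomputable def numComponents : ℕ :=
  Nat.card (Quotient (Relation.EqvGen.setoid G.Adj))

/-- The genus `g(G) = c(G) + e(G) - v(G)`. -/
noncomputable def genus : ℤ :=
  (numComponents G : ℤ) + (Fintype.card G.E : ℤ) - (Fintype.card G.V : ℤ)

/-- A real structure on a finite graph: involutions on vertices and edges
compatible with the incidence map. -/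
structure RealStructure (G : FinGraph) where
  ιV : G.V → G.V
  ιE : G.E → G.E
  ιV_invol : ∀ v, ιV (ιV v) = v
  ιE_invol : ∀ e, ιE (ιE e) = e
  compat : ∀ e, G.ψ (ιE e) = (G.ψ e).map ιV

variable {G} (σ : RealStructure G)

/-- A vertex is real if it is fixed by the involution. -/
def RealV (v : G.V) : Prop := σ.ιV v = v

/-- An edge is real if it is fixed by the involution. -/
def RealE (e : G.E) : Prop := σ.ιE e = e

/-- A real edge is isolated if some end of it is not a real vertex. -/
def IsolatedRealE (e : G.E) : Prop := RealE σ e ∧ ∃ v ∈ G.ψ e, ¬ RealV σ v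

/-- A non-isolated real edge: a real edge all of whose ends are real vertices. -/
def NonIsolatedRealE (e : G.E) : Prop := RealE σ e ∧ ∀ v ∈ G.ψ e, RealV σ v

/-- The vertex set of the real locus graph `G(ℝ)`: the real vertices. -/
def RV := {v : G.V // RealV σ v}

/-- Adjacency in the real locus graph `G(ℝ)`: via non-isolated real edges. -/
def adjR (v w : RV σ) : Prop :=
  ∃ e : G.E, NonIsolatedRealE σ e ∧ G.ψ e = s(v.1, w.1)

/-- The connected components of the real locus graph `G(ℝ)`. -/
def CompR := Quotient (Relation.EqvGen.setoid (adjR σ))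

/-- The genus of a connected component of `G(ℝ)`:
`1 + (number of its edges) - (number of its vertices)`. -/
noncomputable def compGenus (c : CompR σ) : ℤ :=
  1 + (Nat.card {e : G.E // NonIsolatedRealE σ e ∧
        ∃ v : RV σ, v.1 ∈ G.ψ e ∧ Quotient.mk (Relation.EqvGen.setoid (adjR σ)) v = c} : ℤ)
    - (Nat.card {v : RV σ // Quotient.mk (Relation.EqvGen.setoid (adjR σ)) v = c} : ℤ)

/-- The number `s(G) = e^i(G) + Σ_i (g(G(ℝ)_i) + 1)`. -/
noncomputable def sNum : ℤ :=
  (Nat.card {e : G.E // IsolatedRealE σ e} : ℤ) + ∑ᶠ c : CompR σ, (compGenus σ c + 1)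

/-- One step of a walk containing no real vertex and no real edge. -/
def nonRealAdj (v w : G.V) : Prop :=
  ¬ RealV σ v ∧ ¬ RealV σ w ∧ ∃ e : G.E, ¬ RealE σ e ∧ G.ψ e = s(v, w)

/-- `a(G) = 1` iff there is a non-real vertex `v` and a walk from `v` to `v̄`
containing no real vertex and no real edge. -/
def aProp : Prop :=
  ∃ v : G.V, ¬ RealV σ v ∧ Relation.ReflTransGen (nonRealAdj σ) v (σ.ιV v)

/-- `a(G)` as a number. -/
noncomputable def aNum : ℕ := @ite _ (aProp σ) (Classical.dec _) 1 0

/-- The degree of a divisor (a divisor on `G` is a function `G.V → ℤ`). -/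
def deg (D : G.V → ℤ) : ℤ := ∑ v, D v

/-- A divisor is effective if all its coefficients are nonnegative. -/
def Eff (D : G.V → ℤ) : Prop := ∀ v, 0 ≤ D v

variable (G)

/-- The contribution of the edge `e` to the principal divisor `Δ(f)`. -/
def edgeLap (f : G.V → ℤ) (e : G.E) : G.V → ℤ :=
  Sym2.lift ⟨fun a b v => (if v = a then f b - f a else 0) + (if v = b then f a - f b else 0),
    fun a b => funext fun v => add_comm _ _⟩ (G.ψ e)

/-- The principal divisor `Δ(f)(v) = Σ_{e, ψ(e) = {v,w}} (f(w) - f(v))`. -/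
def Lap (f : G.V → ℤ) : G.V → ℤ := fun v => ∑ e, edgeLap G f e v

/-- Two divisors are linearly equivalent if their difference is principal. -/
def LinEquiv (D₁ D₂ : G.V → ℤ) : Prop := ∃ f : G.V → ℤ, D₂ = D₁ + Lap G f

variable {G}

/-- The conjugate divisor `D̄(v) = D(v̄)`. -/
def conjDiv (D : G.V → ℤ) : G.V → ℤ := fun v => D (σ.ιV v)

/-- A divisor is real if it equals its conjugate. -/
def IsRealDiv (D : G.V → ℤ) : Prop := conjDiv σ D = D

variable (G)

/-- The divisor consisting of the single vertex `v`. -/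
def unitDiv (v : G.V) : G.V → ℤ := fun w => if w = v then 1 else 0

/-- `RankGE G D r` : every effective divisor `E` of degree `r` is dominated by
some effective divisor `D'` linearly equivalent to `D`.  The rank `rk(D)` is
the greatest `r` with this property (note it holds vacuously for `r < 0`, so
the greatest such `r` is `-1` exactly when `|D| = ∅`). -/
def RankGE (D : G.V → ℤ) (r : ℤ) : Prop :=
  ∀ E : G.V → ℤ, Eff E → deg E = r →
    ∃ D' : G.V → ℤ, LinEquiv G D D' ∧ Eff D' ∧ Eff (D' - E)

/-- `r` is the rank of `D`: it is the greatest element of `{r | RankGE G D r}`. -/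
def HasRank (D : G.V → ℤ) (r : ℤ) : Prop := IsGreatest {r' : ℤ | RankGE G D r'} r

variable {G}

/-- The real analogue of `RankGE`, using real effective divisors only. -/
def RealRankGE (D : G.V → ℤ) (r : ℤ) : Prop :=
  ∀ E : G.V → ℤ, Eff E → IsRealDiv σ E → deg E = r →
    ∃ D' : G.V → ℤ, LinEquiv G D D' ∧ Eff D' ∧ IsRealDiv σ D' ∧ Eff (D' - E)

/-- `r` is the real rank of `D`. -/
def HasRealRank (D : G.V → ℤ) (r : ℤ) : Prop :=
  IsGreatest {r' : ℤ | RealRankGE σ D r'} r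

/-- An M-graph: a connected graph with a real structure, no isolated real
edges, and `s(G) = g(G) + 1`. -/
def IsMGraph : Prop :=
  G.Connected ∧ (∀ e : G.E, ¬ IsolatedRealE σ e) ∧ sNum σ = G.genus + 1

/-- A strong M-graph: an M-graph such that `G(ℝ)` has `g(G) + 1` connected
components. -/
def IsStrongMGraph : Prop :=
  IsMGraph σ ∧ (Nat.card (CompR σ) : ℤ) = G.genus + 1

/-- The degree of the restriction of a divisor to the connected component `c`
of the real locus graph `G(ℝ)`. -/
noncomputable def degOn (c : CompR σ) (D : G.V → ℤ) : ℤ :=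
  ∑ᶠ (v : {v : RV σ // Quotient.mk (Relation.EqvGen.setoid (adjR σ)) v = c}), D v.1.1

/-- The valence of a vertex: the number of edges incident to it. -/
noncomputable def valence (v : G.V) : ℤ := (Nat.card {e : G.E // v ∈ G.ψ e} : ℤ)

/-- The canonical divisor `K_G = Σ_v (val(v) - 2) v`. -/
noncomputable def canonicalDiv : G.V → ℤ := fun v => valence v - 2

end FinGraph

/-!
The orbit graph `G / σ` is a tree. Its vertices and edges number `(v(G) + v(G(ℝ))) / 2` and
`(e(G) + e(G(ℝ))) / 2`; for a strong M-graph `v(G(ℝ)) - e(G(ℝ)) = g + 1` (from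
`s(G) = g + 1` and the `g + 1` components of `G(ℝ)`), while `v(G) - e(G) = 1 - g`. So the connected
graph `G / σ` has one more vertex than edges, and every edge orbit `{e, ē}` of `G` separates the
vertices into two conjugation-invariant sides. The indicator of one side (doubled if `e` is real)
shows `v + v̄ ∼ w + w̄` for the ends `v, w` of `e`. Hence all divisors `v + v̄` are linearly
equivalent, and each of them is a real `g¹₂`, since `x ≤ x + x̄`.
-/

open Relation

lemma Nat.card_eq_sum_card_fiber {α β : Type*} [Finite α] [Fintype β] (g : α → β) :
    Nat.card α = ∑ b, Nat.card {a // g a = b} :=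
  (Nat.card_congr (Equiv.sigmaFiberEquiv g)).symm.trans Nat.card_sigma

namespace Function.Involutive

variable {α : Type*} {f : α → α}

def orbitSetoid (hf : Involutive f) : Setoid α where
  r y x := y = x ∨ y = f x
  iseqv := by
    refine ⟨fun x => Or.inl rfl, ?_, ?_⟩
    · rintro x y (rfl | rfl)
      exacts [Or.inl rfl, Or.inr (hf y).symm]
    · rintro x y z (rfl | rfl) (rfl | rfl)
      exacts [Or.inl rfl, Or.inr rfl, Or.inr rfl, Or.inl (hf _)]

lemma mk_eq_mk_iff (hf : Involutive f) {x y : α} :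
    Quotient.mk hf.orbitSetoid y = Quotient.mk hf.orbitSetoid x ↔ y = x ∨ y = f x :=
  Quotient.eq

lemma card_fiber_add_card_fixed_fiber [Finite α] (hf : Involutive f) (x : α) :
    Nat.card {y // Quotient.mk hf.orbitSetoid y = Quotient.mk _ x} +
      Nat.card {y : {y // f y = y} // Quotient.mk hf.orbitSetoid y = Quotient.mk _ x} = 2 := by
  simp only [mk_eq_mk_iff]
  by_cases hx : f x = x
  · have hfix : Nat.card {y : {y // f y = y} // y.1 = x} = 1 :=
      Nat.card_eq_one_iff_exists.2 ⟨⟨⟨x, hx⟩, rfl⟩, fun ⟨⟨_, _⟩, h⟩ => by subst h; rfl⟩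
    simp [hx, hfix]
  · have hnot : ∀ y : α, f y = y → ¬ (y = x ∨ y = f x) := by
      rintro y hy (rfl | rfl)
      exacts [hx hy, hx ((hf x).symm.trans hy).symm]
    have : IsEmpty {y : {y // f y = y} // y.1 = x ∨ y.1 = f x} :=
      ⟨fun ⟨⟨y, hy⟩, h⟩ => hnot y hy h⟩
    change Nat.card ({x, f x} : Set α) + _ = 2
    rw [Nat.card_of_isEmpty (α := {y : {y // f y = y} // _}), Nat.card_coe_set_eq,
      Set.ncard_pair (Ne.symm hx)]

lemma card_add_card_fixedPoints [Finite α] (hf : Involutive f) :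
    Nat.card α + Nat.card {x // f x = x} = 2 * Nat.card (Quotient hf.orbitSetoid) := by
  have := Fintype.ofFinite (Quotient hf.orbitSetoid)
  rw [Nat.card_eq_sum_card_fiber (Quotient.mk hf.orbitSetoid),
    Nat.card_eq_sum_card_fiber fun y : {y // f y = y} => Quotient.mk hf.orbitSetoid y.1,
    ← Finset.sum_add_distrib, Nat.card_eq_fintype_card, ← Finset.card_univ, mul_comm,
    ← smul_eq_mul, ← Finset.sum_const]
  refine Finset.sum_congr rfl fun c _ => ?_
  induction c using Quotient.inductionOn with | _ x =>
  exact hf.card_fiber_add_card_fixed_fiber x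

end Function.Involutive

namespace FinGraph

section Graph

variable {H : FinGraph}

instance : Std.Symm H.Adj := ⟨fun _ _ ⟨e, he⟩ => ⟨e, he.trans Sym2.eq_swap⟩⟩

lemma numComponents_eq_one (h : H.Connected) : H.numComponents = 1 := by
  obtain ⟨⟨v⟩, hreach⟩ := h
  rw [numComponents, Nat.card_eq_one_iff_unique]
  refine ⟨⟨fun x y => ?_⟩, ⟨Quotient.mk _ v⟩⟩
  induction x using Quotient.inductionOn with | _ a =>
  induction y using Quotient.inductionOn with | _ b =>
  exact Quotient.sound (EqvGen.reflTransGen_le_eqvGen _ _ _ (hreach a b))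

lemma genus_eq_of_connected (h : H.Connected) :
    H.genus = 1 + Nat.card H.E - Nat.card H.V := by
  simp only [genus, numComponents_eq_one h, Nat.card_eq_fintype_card]
  push_cast
  ring

def toSimpleGraph (H : FinGraph) : SimpleGraph H.V := SimpleGraph.fromRel H.Adj

lemma Connected.connected_toSimpleGraph (h : H.Connected) : H.toSimpleGraph.Connected := by
  have := h.1
  refine ⟨fun v w => ?_⟩
  induction h.2 v w with
  | refl => rfl
  | @tail a b _ hab ih =>
    by_cases hne : a = b
    · exact hne ▸ ih
    · exact ih.trans (SimpleGraph.Adj.reachable ⟨hne, Or.inl hab⟩)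

lemma card_edgeSet_toSimpleGraph_le : Nat.card H.toSimpleGraph.edgeSet ≤ Nat.card H.E := by
  refine (Nat.card_mono (Set.finite_range H.ψ) ?_).trans (Finite.card_range_le H.ψ)
  rintro ⟨v, w⟩ ⟨-, ⟨e, he⟩ | ⟨e, he⟩⟩
  · exact ⟨e, he⟩
  · exact ⟨e, he.trans Sym2.eq_swap⟩

lemma Connected.card_V_le_card_E_add_one (h : H.Connected) : Nat.card H.V ≤ Nat.card H.E + 1 :=
  h.connected_toSimpleGraph.card_vert_le_card_edgeSet_add_one.trans
    (Nat.add_le_add_right card_edgeSet_toSimpleGraph_le 1)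

noncomputable abbrev deleteEdge (H : FinGraph) (ε : H.E) : FinGraph :=
  letI := Classical.decEq H.E
  { V := H.V, E := {d : H.E // d ≠ ε}, ψ := fun d => H.ψ d }

lemma card_deleteEdge_E_add_one (ε : H.E) : Nat.card (H.deleteEdge ε).E + 1 = Nat.card H.E := by
  classical
  have : Finite (H.deleteEdge ε).E := Finite.of_fintype _
  rw [← Finite.card_option]
  exact Nat.card_congr (Equiv.optionSubtypeNe ε)

lemma not_reflTransGen_deleteEdge (h : H.Connected) (hcard : Nat.card H.V = Nat.card H.E + 1)
    {ε : H.E} {x y : H.V} (hε : H.ψ ε = s(x, y)) :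
    ¬ ReflTransGen (H.deleteEdge ε).Adj x y := by
  intro hxy
  have hconn : (H.deleteEdge ε).Connected := by
    refine ⟨h.1, fun a b => ?_⟩
    refine reflTransGen_closed (fun u w ⟨d, hd⟩ => ?_) _ _ (h.2 a b)
    by_cases hdε : d = ε
    · rw [hdε, hε] at hd
      rcases Sym2.eq_iff.1 hd with ⟨rfl, rfl⟩ | ⟨rfl, rfl⟩
      · exact hxy
      · exact Std.Symm.symm _ _ hxy
    · exact ReflTransGen.single ⟨⟨d, hdε⟩, hd⟩
  have hle : Nat.card H.V ≤ Nat.card (H.deleteEdge ε).E + 1 := hconn.card_V_le_card_E_add_one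
  have := card_deleteEdge_E_add_one ε
  omega

end Graph

namespace RealStructure

open Function

variable {G : FinGraph} (σ : RealStructure G)

noncomputable def quotient : FinGraph where
  V := Quotient (Involutive.orbitSetoid σ.ιV_invol)
  E := Quotient (Involutive.orbitSetoid σ.ιE_invol)
  decV := Classical.decEq _
  fintV := Fintype.ofFinite _
  fintE := Fintype.ofFinite _
  ψ := Quotient.lift (fun e => (G.ψ e).map (Quotient.mk _)) <| by
    rintro e _ (rfl | rfl)
    · rfl
    · simp only [σ.compat, Sym2.map_map]
      congr 1
      funext v
      exact Quotient.sound (Or.inr rfl)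

def projV (v : G.V) : σ.quotient.V := Quotient.mk _ v

def projE (e : G.E) : σ.quotient.E := Quotient.mk _ e

lemma projV_eq_projV_iff {v w : G.V} : σ.projV w = σ.projV v ↔ w = v ∨ w = σ.ιV v :=
  Involutive.mk_eq_mk_iff _

lemma projE_eq_projE_iff {e d : G.E} : σ.projE d = σ.projE e ↔ d = e ∨ d = σ.ιE e :=
  Involutive.mk_eq_mk_iff _

lemma projV_ιV (v : G.V) : σ.projV (σ.ιV v) = σ.projV v :=
  σ.projV_eq_projV_iff.2 (Or.inr rfl)

lemma quotient_ψ_projE (e : G.E) : σ.quotient.ψ (σ.projE e) = (G.ψ e).map σ.projV := rfl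

lemma card_V_add_card_realV :
    Nat.card G.V + Nat.card {v // RealV σ v} = 2 * Nat.card σ.quotient.V :=
  Involutive.card_add_card_fixedPoints _

lemma card_E_add_card_realE :
    Nat.card G.E + Nat.card {e // RealE σ e} = 2 * Nat.card σ.quotient.E :=
  Involutive.card_add_card_fixedPoints _

lemma adj_projV {v w : G.V} (h : G.Adj v w) : σ.quotient.Adj (σ.projV v) (σ.projV w) :=
  let ⟨e, he⟩ := h
  ⟨σ.projE e, by rw [quotient_ψ_projE, he, Sym2.map_mk]⟩

lemma connected_quotient (h : G.Connected) : σ.quotient.Connected := by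
  obtain ⟨⟨v₀⟩, hreach⟩ := h
  refine ⟨⟨σ.projV v₀⟩, fun x y => ?_⟩
  induction x using Quotient.inductionOn with | _ v =>
  induction y using Quotient.inductionOn with | _ w =>
  exact ReflTransGen.lift σ.projV (fun _ _ => σ.adj_projV) _ _ (hreach v w)

end RealStructure

section RealLocus

variable {G : FinGraph} (σ : RealStructure G)

instance : Finite (RV σ) := inferInstanceAs (Finite {v : G.V // RealV σ v})

instance : Finite (CompR σ) := Quotient.finite _

noncomputable def compOfEdge (e : {e : G.E // NonIsolatedRealE σ e}) : CompR σ :=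
  Quotient.mk _ ⟨(G.ψ e.1).out.1, e.2.2 _ (Sym2.out_fst_mem _)⟩

lemma mk_eq_mk_of_mem_of_nonIsolated {e : G.E} (he : NonIsolatedRealE σ e) {v w : RV σ}
    (hv : v.1 ∈ G.ψ e) (hw : w.1 ∈ G.ψ e) :
    Quotient.mk (EqvGen.setoid (adjR σ)) v = Quotient.mk _ w := by
  by_cases hvw : v = w
  · rw [hvw]
  · have hψ : G.ψ e = s(v.1, w.1) :=
      (Sym2.mem_and_mem_iff fun h => hvw (Subtype.ext h)).1 ⟨hv, hw⟩
    exact Quotient.sound (EqvGen.rel _ _ ⟨e, he, hψ⟩)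

lemma card_compOfEdge_fiber (c : CompR σ) :
    Nat.card {e // compOfEdge σ e = c} = Nat.card {e : G.E // NonIsolatedRealE σ e ∧
      ∃ v : RV σ, v.1 ∈ G.ψ e ∧ Quotient.mk (EqvGen.setoid (adjR σ)) v = c} :=
  Nat.card_congr
    { toFun := fun e => ⟨e.1.1, e.1.2, _, Sym2.out_fst_mem _, e.2⟩
      invFun := fun e => ⟨⟨e.1, e.2.1⟩, by
        obtain ⟨_, he, v, hv, hvc⟩ := e
        exact (mk_eq_mk_of_mem_of_nonIsolated σ he (Sym2.out_fst_mem _) hv).trans hvc⟩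
      left_inv := fun _ => rfl
      right_inv := fun _ => rfl }

lemma sNum_eq : sNum σ = Nat.card {e // IsolatedRealE σ e} + 2 * Nat.card (CompR σ)
    + Nat.card {e // NonIsolatedRealE σ e} - Nat.card {v // RealV σ v} := by
  have := Fintype.ofFinite (CompR σ)
  have hV : (Nat.card {v // RealV σ v} : ℤ) = ∑ c : CompR σ,
      (Nat.card {v : RV σ // Quotient.mk (EqvGen.setoid (adjR σ)) v = c} : ℤ) := by
    exact_mod_cast Nat.card_eq_sum_card_fiber (β := CompR σ) (Quotient.mk _)
  have hE : (Nat.card {e // NonIsolatedRealE σ e} : ℤ) = ∑ c : CompR σ,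
      (Nat.card {e : G.E // NonIsolatedRealE σ e ∧
        ∃ v : RV σ, v.1 ∈ G.ψ e ∧ Quotient.mk (EqvGen.setoid (adjR σ)) v = c} : ℤ) := by
    simp only [← card_compOfEdge_fiber]
    exact_mod_cast Nat.card_eq_sum_card_fiber (compOfEdge σ)
  rw [sNum, finsum_eq_sum_of_fintype, hV, hE, Nat.card_eq_fintype_card (α := CompR σ)]
  simp only [compGenus, Finset.sum_add_distrib, Finset.sum_sub_distrib, Finset.sum_const,
    Finset.card_univ]
  ring

lemma nonIsolatedRealE_iff (hni : ∀ e, ¬ IsolatedRealE σ e) {e : G.E} :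
    NonIsolatedRealE σ e ↔ RealE σ e :=
  ⟨And.left, fun he => ⟨he, fun v hv => by_contra fun hv' => hni e ⟨he, v, hv, hv'⟩⟩⟩

variable {σ}

lemma IsStrongMGraph.card_realV (hM : IsStrongMGraph σ) :
    (Nat.card {v // RealV σ v} : ℤ) = Nat.card {e // RealE σ e} + G.genus + 1 := by
  obtain ⟨⟨-, hni, hs⟩, hcomp⟩ := hM
  have : IsEmpty {e // IsolatedRealE σ e} := ⟨fun e => hni e.1 e.2⟩
  rw [sNum_eq, Nat.card_of_isEmpty, Nat.cast_zero, hcomp,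
    Nat.card_congr (Equiv.subtypeEquivRight fun _ => nonIsolatedRealE_iff σ hni)] at hs
  linarith

lemma IsStrongMGraph.card_quotient_V (hM : IsStrongMGraph σ) :
    Nat.card σ.quotient.V = Nat.card σ.quotient.E + 1 := by
  have hV := σ.card_V_add_card_realV
  have hE := σ.card_E_add_card_realE
  have hreal := hM.card_realV
  have hg := genus_eq_of_connected hM.1.1
  omega

end RealLocus

section Divisor

variable {G : FinGraph}

lemma exists_ψ_eq (e : G.E) : ∃ a b, G.ψ e = s(a, b) :=
  Sym2.inductionOn (G.ψ e) fun a b => ⟨a, b, rfl⟩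

lemma edgeLap_of_eq (f : G.V → ℤ) {e : G.E} {a b : G.V} (he : G.ψ e = s(a, b)) :
    edgeLap G f e = (f b - f a) • (unitDiv G a - unitDiv G b) := by
  funext u
  simp only [edgeLap, he, Sym2.lift_mk, unitDiv, Pi.smul_apply, Pi.sub_apply, smul_eq_mul]
  split_ifs <;> ring

lemma lap_eq_sum (f : G.V → ℤ) : Lap G f = ∑ e, edgeLap G f e := by
  funext u
  simp only [Lap, Finset.sum_apply]

lemma edgeLap_add (f g : G.V → ℤ) (e : G.E) :
    edgeLap G (f + g) e = edgeLap G f e + edgeLap G g e := by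
  obtain ⟨a, b, he⟩ := exists_ψ_eq e
  simp only [edgeLap_of_eq _ he, Pi.add_apply, ← add_smul]
  congr 1
  ring

lemma lap_add (f g : G.V → ℤ) : Lap G (f + g) = Lap G f + Lap G g := by
  simp only [lap_eq_sum, edgeLap_add, Finset.sum_add_distrib]

lemma lap_zero : Lap G 0 = 0 := by
  simpa using lap_add (G := G) 0 0

lemma LinEquiv.refl (D : G.V → ℤ) : LinEquiv G D D :=
  ⟨0, by rw [lap_zero, add_zero]⟩

lemma LinEquiv.trans {D₁ D₂ D₃ : G.V → ℤ} (h₁ : LinEquiv G D₁ D₂) (h₂ : LinEquiv G D₂ D₃) :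
    LinEquiv G D₁ D₃ := by
  obtain ⟨f, rfl⟩ := h₁
  obtain ⟨g, rfl⟩ := h₂
  exact ⟨f + g, by rw [lap_add, add_assoc]⟩

lemma lap_eq_sum_of_forall_not_mem (f : G.V → ℤ) (S : Finset G.E)
    (hS : ∀ e ∉ S, ∀ a b, G.ψ e = s(a, b) → f a = f b) :
    Lap G f = ∑ e ∈ S, edgeLap G f e := by
  rw [lap_eq_sum, ← Finset.sum_subset (Finset.subset_univ S)]
  rintro e - he
  obtain ⟨a, b, hab⟩ := exists_ψ_eq e
  rw [edgeLap_of_eq _ hab, hS e he a b hab, sub_self, zero_smul]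

lemma edgeLap_indicator {A : Set G.V} {e : G.E} {a b : G.V} (he : G.ψ e = s(a, b))
    (ha : a ∈ A) (hb : b ∉ A) : edgeLap G (A.indicator 1) e = unitDiv G b - unitDiv G a := by
  rw [edgeLap_of_eq _ he, Set.indicator_of_mem ha, Set.indicator_of_notMem hb]
  simp

lemma eff_unitDiv (v : G.V) : Eff (unitDiv G v) := fun u => by
  unfold unitDiv
  split_ifs <;> norm_num

lemma deg_unitDiv (v : G.V) : deg (unitDiv G v) = 1 := by
  simp [deg, unitDiv]

lemma eq_unitDiv_of_eff_of_deg_eq_one {E : G.V → ℤ} (hE : Eff E) (hdeg : deg E = 1) :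
    ∃ v, E = unitDiv G v := by
  have hle : ∀ s : Finset G.V, ∑ u ∈ s, E u ≤ 1 := fun s =>
    hdeg ▸ Finset.sum_le_sum_of_subset_of_nonneg (Finset.subset_univ s) fun u _ _ => hE u
  obtain ⟨v, hv⟩ : ∃ v, 0 < E v := by
    by_contra! h
    have := Finset.sum_nonpos fun u (_ : u ∈ Finset.univ) => h u
    rw [deg] at hdeg
    omega
  refine ⟨v, funext fun u => ?_⟩
  have hv₁ : E v ≤ 1 := by simpa using hle {v}
  unfold unitDiv
  split_ifs with hu
  · subst hu
    omega
  · have := hle {v, u}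
    rw [Finset.sum_pair (Ne.symm hu)] at this
    have := hE u
    omega

end Divisor

section OrbitDivisor

variable {G : FinGraph} (σ : RealStructure G)

def orbitDiv (v : G.V) : G.V → ℤ := unitDiv G v + unitDiv G (σ.ιV v)

lemma isRealDiv_orbitDiv (v : G.V) : IsRealDiv σ (orbitDiv σ v) := by
  funext u
  have hι : ∀ x, σ.ιV u = x ↔ u = σ.ιV x := fun x =>
    ⟨fun h => h ▸ (σ.ιV_invol u).symm, fun h => h ▸ σ.ιV_invol x⟩
  simp only [conjDiv, orbitDiv, unitDiv, Pi.add_apply, hι, σ.ιV_invol]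
  ring

lemma eff_orbitDiv_sub_unitDiv (v : G.V) : Eff (orbitDiv σ v - unitDiv G v) := by
  simpa [orbitDiv] using eff_unitDiv (σ.ιV v)

lemma eff_orbitDiv (v : G.V) : Eff (orbitDiv σ v) := fun u =>
  add_nonneg (eff_unitDiv v u) (eff_unitDiv _ u)

lemma deg_orbitDiv (v : G.V) : deg (orbitDiv σ v) = 2 := by
  simp only [deg, orbitDiv, Pi.add_apply, Finset.sum_add_distrib]
  rw [← deg, ← deg, deg_unitDiv, deg_unitDiv, one_add_one_eq_two]

variable {σ}

/-- Since `G / σ` is a tree, the orbit of any edge is a bridge of `G / σ`; the cut is the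
preimage of one side. -/
lemma IsStrongMGraph.exists_cut (hM : IsStrongMGraph σ) {e : G.E} {v w : G.V}
    (he : G.ψ e = s(v, w)) :
    ∃ A : Set G.V, v ∈ A ∧ w ∉ A ∧ (∀ u, σ.ιV u ∈ A ↔ u ∈ A) ∧
      ∀ d a b, G.ψ d = s(a, b) → d ≠ e → d ≠ σ.ιE e → (a ∈ A ↔ b ∈ A) := by
  set T := σ.quotient.deleteEdge (σ.projE e)
  have hbridge : ¬ ReflTransGen T.Adj (σ.projV v) (σ.projV w) :=
    not_reflTransGen_deleteEdge (σ.connected_quotient hM.1.1) hM.card_quotient_V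
      (by rw [σ.quotient_ψ_projE, he, Sym2.map_mk])
  refine ⟨{u | ReflTransGen T.Adj (σ.projV v) (σ.projV u)}, ReflTransGen.refl, hbridge,
    fun u => by simp [σ.projV_ιV], fun d a b hd hde hdιe => ?_⟩
  have hne : σ.projE d ≠ σ.projE e := fun h =>
    (σ.projE_eq_projE_iff.1 h).elim hde hdιe
  have hab : T.Adj (σ.projV a) (σ.projV b) :=
    ⟨⟨σ.projE d, hne⟩, by rw [σ.quotient_ψ_projE, hd, Sym2.map_mk]⟩
  exact ⟨fun h => h.tail hab, fun h => h.tail (Std.Symm.symm _ _ hab)⟩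

/-- The witness is the indicator of `A`, doubled when `e` is real: then `e` is the only edge
leaving `A` and `v + v̄ = 2 v`. -/
lemma linEquiv_orbitDiv_of_cut (hni : ∀ e, ¬ IsolatedRealE σ e) {e : G.E} {v w : G.V}
    (he : G.ψ e = s(v, w)) {A : Set G.V} (hv : v ∈ A) (hw : w ∉ A)
    (hA : ∀ u, σ.ιV u ∈ A ↔ u ∈ A)
    (hcut : ∀ d a b, G.ψ d = s(a, b) → d ≠ e → d ≠ σ.ιE e → (a ∈ A ↔ b ∈ A)) :
    LinEquiv G (orbitDiv σ v) (orbitDiv σ w) := by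
  classical
  have hlap : Lap G (A.indicator 1) = ∑ d ∈ {e, σ.ιE e}, edgeLap G (A.indicator 1) d := by
    refine lap_eq_sum_of_forall_not_mem _ _ fun d hd a b hab => ?_
    simp only [Finset.mem_insert, Finset.mem_singleton, not_or] at hd
    simp [Set.indicator_apply, hcut d a b hab hd.1 hd.2]
  by_cases hreal : σ.ιE e = e
  · have hends := (nonIsolatedRealE_iff σ hni).2 hreal
    have hvr : σ.ιV v = v := hends.2 v (by simp [he])
    have hwr : σ.ιV w = w := hends.2 w (by simp [he])
    refine ⟨A.indicator 1 + A.indicator 1, ?_⟩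
    rw [lap_add, hlap, hreal, Finset.pair_eq_singleton, Finset.sum_singleton,
      edgeLap_indicator he hv hw]
    simp only [orbitDiv, hvr, hwr]
    abel
  · have heι : G.ψ (σ.ιE e) = s(σ.ιV v, σ.ιV w) := by rw [σ.compat, he, Sym2.map_mk]
    refine ⟨A.indicator 1, ?_⟩
    rw [hlap, Finset.sum_pair (Ne.symm hreal), edgeLap_indicator he hv hw,
      edgeLap_indicator heι ((hA v).2 hv) (mt (hA w).1 hw)]
    simp only [orbitDiv]
    abel

lemma IsStrongMGraph.linEquiv_orbitDiv_of_adj (hM : IsStrongMGraph σ) {v w : G.V}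
    (h : G.Adj v w) : LinEquiv G (orbitDiv σ v) (orbitDiv σ w) := by
  obtain ⟨e, he⟩ := h
  obtain ⟨A, hv, hw, hA, hcut⟩ := hM.exists_cut he
  exact linEquiv_orbitDiv_of_cut hM.1.2.1 he hv hw hA hcut

lemma IsStrongMGraph.linEquiv_orbitDiv (hM : IsStrongMGraph σ) (v w : G.V) :
    LinEquiv G (orbitDiv σ v) (orbitDiv σ w) := by
  induction hM.1.1.2 v w with
  | refl => exact LinEquiv.refl _
  | tail _ hadj ih => exact ih.trans (hM.linEquiv_orbitDiv_of_adj hadj)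

end OrbitDivisor

end FinGraph

open FinGraph in
/-- A strong M-graph has a real linear system `g^1_2`: a real
effective divisor of degree `2` and rank at least `1`. -/
theorem strongMGraph_has_g12 (G : FinGraph) (σ : RealStructure G)
    (hM : IsStrongMGraph σ) :
    ∃ D : G.V → ℤ, IsRealDiv σ D ∧ Eff D ∧ deg D = 2 ∧ RankGE G D 1 := by
  obtain ⟨v₀⟩ := hM.1.1.1
  refine ⟨orbitDiv σ v₀, isRealDiv_orbitDiv σ v₀, eff_orbitDiv σ v₀, deg_orbitDiv σ v₀,
    fun E hE hdeg => ?_⟩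
  obtain ⟨x, rfl⟩ := eq_unitDiv_of_eff_of_deg_eq_one hE hdeg
  exact ⟨orbitDiv σ x, hM.linEquiv_orbitDiv v₀ x, eff_orbitDiv σ x,
    eff_orbitDiv_sub_unitDiv σ x⟩
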